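/- The function J̌ attains a global minimum on M_T: there exists a tuple (Σ*_{ρ_0},…,Σ*_{ρ_{T−1}}) ∈ M_T such that J̌(Σ*_{ρ_0},…,Σ*_{ρ_{T−1}}) ≤ J̌(Σ_{ρ_0},…,Σ_{ρ_{T−1}}) for every tuple (Σ_{ρ_0},…,Σ_{ρ_{T−1}}) ∈ M_T. -/

import Mathlib

open Matrix Filter Topology

/-- The unique symmetric positive semidefinite square root of a positive
semidefinite real matrix (junk value `0` if the matrix is not PSD). -/
noncomputable def msqrt {d : ℕ} (X : Matrix (Fin d) (Fin d) ℝ) :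
    Matrix (Fin d) (Fin d) ℝ :=
  letI := Classical.propDecidable X.PosSemidef
  if h : X.PosSemidef then
    (h.1.eigenvectorUnitary : Matrix (Fin d) (Fin d) ℝ) *
      diagonal (fun i => Real.sqrt (h.1.eigenvalues i)) *
      (star h.1.eigenvectorUnitary : Matrix (Fin d) (Fin d) ℝ)
  else 0

/-- The Frobenius norm of a real square matrix. -/
noncomputable def frob {d : ℕ} (X : Matrix (Fin d) (Fin d) ℝ) : ℝ :=
  Real.sqrt (∑ i, ∑ j, X i j ^ 2)

/-- Data of the mutual information optimal control problem for a discrete-time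
linear system `x_{k+1} = A_k x_k + B_k u_k + w_k`. -/
structure LQData (n m : ℕ) where
  ε : ℝ
  A : ℕ → Matrix (Fin n) (Fin n) ℝ
  B : ℕ → Matrix (Fin n) (Fin m) ℝ
  R : ℕ → Matrix (Fin m) (Fin m) ℝ
  F : Matrix (Fin n) (Fin n) ℝ
  Sw : ℕ → Matrix (Fin n) (Fin n) ℝ
  Sini : Matrix (Fin n) (Fin n) ℝ

namespace LQData

variable {n m : ℕ} (P : LQData n m) (T : ℕ) (Srho : ℕ → Matrix (Fin m) (Fin m) ℝ)

/-- The backward Riccati recursion `Π_k` associated with the prior covariances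
`Σ_{ρ_k}`: `Π_T = F` and
`Π_k = A_kᵀ Π_{k+1} A_k − (1/ε) A_kᵀ Π_{k+1} B_k Σ^{1/2} (I + Σ^{1/2} C_k Σ^{1/2})⁻¹ Σ^{1/2} B_kᵀ Π_{k+1} A_k`
with `C_k = (R_k + B_kᵀ Π_{k+1} B_k)/ε`. -/
noncomputable def Ric (k : ℕ) : Matrix (Fin n) (Fin n) ℝ :=
  if h : T ≤ k then P.F
  else
    let Pk := Ric (k + 1)
    let S := msqrt (Srho k)
    let C := (1 / P.ε) • (P.R k + (P.B k)ᵀ * Pk * P.B k)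
    (P.A k)ᵀ * Pk * P.A k -
      (1 / P.ε) • ((P.A k)ᵀ * Pk * P.B k * S * (1 + S * C * S)⁻¹ * S * (P.B k)ᵀ * Pk * P.A k)
termination_by T - k
decreasing_by omega

/-- `C_k = (R_k + B_kᵀ Π_{k+1} B_k)/ε`. -/
noncomputable def Ck (k : ℕ) : Matrix (Fin m) (Fin m) ℝ :=
  (1 / P.ε) • (P.R k + (P.B k)ᵀ * P.Ric T Srho (k + 1) * P.B k)

/-- `Σ_{Q_k} = ε (R_k + B_kᵀ Π_{k+1} B_k)⁻¹`. -/
noncomputable def SigQ (k : ℕ) : Matrix (Fin m) (Fin m) ℝ :=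
  P.ε • (P.R k + (P.B k)ᵀ * P.Ric T Srho (k + 1) * P.B k)⁻¹

/-- Covariance `Σ_{π_k}` of the optimal policy for the fixed prior. -/
noncomputable def SigPi (k : ℕ) : Matrix (Fin m) (Fin m) ℝ :=
  msqrt (Srho k) * (1 + msqrt (Srho k) * P.Ck T Srho k * msqrt (Srho k))⁻¹ * msqrt (Srho k)

/-- Feedback gain `P_k = −(1/ε) Σ_{π_k} B_kᵀ Π_{k+1} A_k`. -/
noncomputable def Pgain (k : ℕ) : Matrix (Fin m) (Fin n) ℝ :=
  -((1 / P.ε) • (P.SigPi T Srho k * (P.B k)ᵀ * P.Ric T Srho (k + 1) * P.A k))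

/-- Forward state covariance recursion under the optimal policy. -/
noncomputable def Sigx : ℕ → Matrix (Fin n) (Fin n) ℝ
  | 0 => P.Sini
  | k + 1 =>
    (P.A k + P.B k * P.Pgain T Srho k) * Sigx k *
        (P.A k + P.B k * P.Pgain T Srho k)ᵀ +
      P.B k * P.SigPi T Srho k * (P.B k)ᵀ + P.Sw k

/-- The standard LQR Riccati recursion `Π̌_k`. -/
noncomputable def RicLQR (k : ℕ) : Matrix (Fin n) (Fin n) ℝ :=
  if h : T ≤ k then P.F
  else
    let Pk := RicLQR (k + 1)
    (P.A k)ᵀ * Pk * P.A k -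
      (P.A k)ᵀ * Pk * P.B k * (P.R k + (P.B k)ᵀ * Pk * P.B k)⁻¹ * (P.B k)ᵀ * Pk * P.A k
termination_by T - k
decreasing_by omega

/-- `Π̂_k = A_kᵀ ⋯ A_{T−1}ᵀ F A_{T−1} ⋯ A_k`. -/
noncomputable def RicHat (k : ℕ) : Matrix (Fin n) (Fin n) ℝ :=
  if h : T ≤ k then P.F
  else (P.A k)ᵀ * RicHat (k + 1) * P.A k
termination_by T - k
decreasing_by omega

/-- `Σ_{w_{k−1}}` with the convention `Σ_{w_{−1}} := Σ_{x_ini}`. -/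
noncomputable def Swm1 (k : ℕ) : Matrix (Fin n) (Fin n) ℝ :=
  if k = 0 then P.Sini else P.Sw (k - 1)

/-- The matrix `M̌_k` from the sufficient condition for stochastic optimal policies. -/
noncomputable def Mcheck (k : ℕ) : Matrix (Fin m) (Fin m) ℝ :=
  (P.R k + (P.B k)ᵀ * P.RicHat T (k + 1) * P.B k)⁻¹ *
      ((P.B k)ᵀ * P.RicLQR T (k + 1) * P.A k * P.Swm1 k * (P.A k)ᵀ *
        P.RicLQR T (k + 1) * P.B k) *
      (P.R k + (P.B k)ᵀ * P.RicHat T (k + 1) * P.B k)⁻¹ -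
    P.ε • (P.R k + (P.B k)ᵀ * P.RicLQR T (k + 1) * P.B k)⁻¹

/-- State covariance under the zero control input. -/
noncomputable def SigxZero : ℕ → Matrix (Fin n) (Fin n) ℝ
  | 0 => P.Sini
  | k + 1 => P.A k * SigxZero k * (P.A k)ᵀ + P.Sw k

/-- The matrix `M̂_k^zero` from the sufficient condition for deterministic optimal policies. -/
noncomputable def MhatZero (k : ℕ) : Matrix (Fin m) (Fin m) ℝ :=
  (P.R k + (P.B k)ᵀ * P.RicLQR T (k + 1) * P.B k)⁻¹ *
      ((P.B k)ᵀ * P.RicHat T (k + 1) * P.A k * P.SigxZero k * (P.A k)ᵀ *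
        P.RicHat T (k + 1) * P.B k) *
      (P.R k + (P.B k)ᵀ * P.RicLQR T (k + 1) * P.B k)⁻¹ -
    P.ε • (P.R k + (P.B k)ᵀ * P.RicHat T (k + 1) * P.B k)⁻¹


/-- The backward recursion `r_k` for the mean offset:
`r_T = 0` and `r_k = A_k⁻¹ r_{k+1} − Π_k⁻¹ A_kᵀ Π_{k+1} B_k (I + Σ_{ρ_k} C_k)⁻¹ μ_{ρ_k}`. -/
noncomputable def rvec (μ : ℕ → Fin m → ℝ) (k : ℕ) : Fin n → ℝ :=
  if h : T ≤ k then 0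
  else
    ((P.A k)⁻¹).mulVec (rvec μ (k + 1)) -
      ((P.Ric T Srho k)⁻¹ * ((P.A k)ᵀ * P.Ric T Srho (k + 1) * P.B k *
        (1 + Srho k * P.Ck T Srho k)⁻¹)).mulVec (μ k)
termination_by T - k
decreasing_by omega

/-- `Θ_k = ε C_k − ε C_k Σ_{π_k} C_k − (I − C_k Σ_{π_k}) B_kᵀ Π_{k+1} A_k Π_k⁻¹ A_kᵀ Π_{k+1} B_k (I − Σ_{π_k} C_k)`. -/
noncomputable def Theta (k : ℕ) : Matrix (Fin m) (Fin m) ℝ :=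
  P.ε • P.Ck T Srho k - P.ε • (P.Ck T Srho k * P.SigPi T Srho k * P.Ck T Srho k) -
    (1 - P.Ck T Srho k * P.SigPi T Srho k) *
      ((P.B k)ᵀ * P.Ric T Srho (k + 1) * P.A k * (P.Ric T Srho k)⁻¹ *
        ((P.A k)ᵀ * P.Ric T Srho (k + 1) * P.B k)) *
      (1 - P.SigPi T Srho k * P.Ck T Srho k)

end LQData

/-- Extend a `T`-tuple of matrices to a function on `ℕ` (by zero). -/
def extT {m : ℕ} (T : ℕ) (σ : Fin T → Matrix (Fin m) (Fin m) ℝ) :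
    ℕ → Matrix (Fin m) (Fin m) ℝ :=
  fun k => if h : k < T then σ ⟨k, h⟩ else 0


/-- Extend a `T`-tuple of vectors to a function on `ℕ` (by zero). -/
def extV {m : ℕ} (T : ℕ) (μ : Fin T → Fin m → ℝ) : ℕ → Fin m → ℝ :=
  fun k => if h : k < T then μ ⟨k, h⟩ else 0

namespace LQData

variable {n m : ℕ} (P : LQData n m) (T : ℕ)

/-- The reduced objective `J̌` as a function of the `T`-tuple of prior covariances. -/
noncomputable def Jcheck (σ : Fin T → Matrix (Fin m) (Fin m) ℝ) : ℝ :=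
  (1 / 2) * ((P.Ric T (extT T σ) 0 * P.Sini).trace +
    ∑ k : Fin T,
      (P.ε * Real.log ((extT T σ k + P.SigQ T (extT T σ) k).det / (P.SigQ T (extT T σ) k).det) +
        (P.Ric T (extT T σ) (k + 1) * P.Sw k).trace))

/-- `L_k = (Σ_{Q_k} + Σ_{ρ_k})⁻¹`. -/
noncomputable def Lmat (Srho : ℕ → Matrix (Fin m) (Fin m) ℝ) (k : ℕ) :
    Matrix (Fin m) (Fin m) ℝ :=
  (P.SigQ T Srho k + Srho k)⁻¹

/-- `E_k = (1/ε) Σ_{Q_k} B_kᵀ Π_{k+1} A_k`. -/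
noncomputable def Emat (Srho : ℕ → Matrix (Fin m) (Fin m) ℝ) (k : ℕ) :
    Matrix (Fin m) (Fin n) ℝ :=
  (1 / P.ε) • (P.SigQ T Srho k * (P.B k)ᵀ * P.Ric T Srho (k + 1) * P.A k)

/-- `J̌'_k = (ε/2) L_k (Σ_{ρ_k} + Σ_{Q_k} − E_k Σ_{x_k} E_kᵀ) L_k`. -/
noncomputable def Jprime (Srho : ℕ → Matrix (Fin m) (Fin m) ℝ) (k : ℕ) :
    Matrix (Fin m) (Fin m) ℝ :=
  (P.ε / 2) • (P.Lmat T Srho k *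
    (Srho k + P.SigQ T Srho k - P.Emat T Srho k * P.Sigx T Srho k * (P.Emat T Srho k)ᵀ) *
    P.Lmat T Srho k)

/-- The alternating-optimization update map `𝒯` on `T`-tuples of prior covariances:
`𝒯(σ)_k = Σ_{π_k} + P_k Σ_{x_k} P_kᵀ`. -/
noncomputable def Tmap (σ : Fin T → Matrix (Fin m) (Fin m) ℝ) :
    Fin T → Matrix (Fin m) (Fin m) ℝ :=
  fun k =>
    P.SigPi T (extT T σ) k +
      P.Pgain T (extT T σ) k * P.Sigx T (extT T σ) k * (P.Pgain T (extT T σ) k)ᵀ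

/-- The objective `J` as a function of the prior means, for fixed prior covariances:
`J(μ) = (1/2)( r_0ᵀ Π_0 r_0 + Σ_k μ_{ρ_k}ᵀ Θ_k μ_{ρ_k} )`. -/
noncomputable def Jmean (Srho : ℕ → Matrix (Fin m) (Fin m) ℝ) (μ : Fin T → Fin m → ℝ) : ℝ :=
  (1 / 2) *
    (P.rvec T Srho (extV T μ) 0 ⬝ᵥ (P.Ric T Srho 0).mulVec (P.rvec T Srho (extV T μ) 0) +
      ∑ k : Fin T, μ k ⬝ᵥ (P.Theta T Srho k).mulVec (μ k))

end LQData

open Matrix Filter Topology LQData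

/-!
`J̌` is continuous on the closed cone of positive semidefinite tuples. Eliminating the square
roots by `S (1 + S C S)⁻¹ S = (1 + Σ C)⁻¹ Σ` (with `S = Σ^{1/2}`) makes `Π_k` a continuous function
of the `Σ_{ρ_j}`; dividing by `ε` shows that each step of the recursion is an ordinary LQR Riccati
step with input matrix `B_k S` and control cost `ε + S R_k S`, so every `Π_k` is positive
semidefinite and every trace term of `J̌` is nonnegative. The log-determinant term is coercive:
`det (Σ_ρ + Σ_Q) / det Σ_Q = det (1 + S C_k S) ≥ 1 + tr (C_k Σ_ρ) ≥ 1 + c tr Σ_ρ / ε` with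
`c > 0` a lower bound for `R_k`. Hence `J̌` grows at least like `log (tr Σ_{ρ_k})` in each
coordinate, its sublevel sets are compact, and the extreme value theorem applies.
-/

theorem Finset.one_add_sum_le_prod_one_add {ι R : Type*} [CommSemiring R] [PartialOrder R]
    [IsOrderedRing R] (s : Finset ι) {f : ι → R} (hf : ∀ i ∈ s, 0 ≤ f i) :
    1 + ∑ i ∈ s, f i ≤ ∏ i ∈ s, (1 + f i) := by
  classical
  induction s using Finset.induction_on with
  | empty => simp
  | insert a s ha ih =>
    rw [Finset.sum_insert ha, Finset.prod_insert ha]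
    have hfa : 0 ≤ f a := hf a (Finset.mem_insert_self a s)
    have hs : 0 ≤ ∑ i ∈ s, f i := Finset.sum_nonneg fun i hi => hf i (Finset.mem_insert_of_mem hi)
    calc 1 + (f a + ∑ i ∈ s, f i) ≤ 1 + (f a + ∑ i ∈ s, f i) + f a * ∑ i ∈ s, f i :=
          le_add_of_nonneg_right (mul_nonneg hfa hs)
      _ = (1 + f a) * (1 + ∑ i ∈ s, f i) := by ring
      _ ≤ (1 + f a) * ∏ i ∈ s, (1 + f i) :=
          mul_le_mul_of_nonneg_left (ih fun i hi => hf i (Finset.mem_insert_of_mem hi))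
            (add_nonneg zero_le_one hfa)

theorem Continuous.matrix_nonsing_inv {X ι : Type*} [TopologicalSpace X] [Fintype ι]
    [DecidableEq ι] {A : X → Matrix ι ι ℝ} (hA : Continuous A) (h : ∀ x, (A x).det ≠ 0) :
    Continuous fun x => (A x)⁻¹ :=
  continuous_iff_continuousAt.2 fun x =>
    (continuousAt_matrix_inv _ (NormedRing.inverse_continuousAt (h x).isUnit.unit)).comp
      hA.continuousAt

namespace Matrix

section Closed

variable {ι : Type*}

theorem PosSemidef.transpose_eq {A : Matrix ι ι ℝ} (hA : A.PosSemidef) : Aᵀ = A :=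
  conjTranspose_eq_transpose_of_trivial A ▸ hA.1

variable [Fintype ι]

theorem isClosed_setOf_posSemidef : IsClosed {A : Matrix ι ι ℝ | A.PosSemidef} := by
  simp only [posSemidef_iff_dotProduct_mulVec, Set.ofPred_and, Set.ofPred_forall]
  exact (isClosed_eq continuous_id.matrix_conjTranspose continuous_id).inter
    (isClosed_iInter fun x => isClosed_le continuous_const (by fun_prop))

theorem PosSemidef.abs_apply_le_trace {A : Matrix ι ι ℝ} (hA : A.PosSemidef) (i j : ι) :
    |A i j| ≤ A.trace := by
  classical
  have hdiag : ∀ k, A k k ≤ A.trace := fun k =>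
    Finset.single_le_sum (fun l _ => hA.diag_nonneg (i := l)) (Finset.mem_univ k)
  have hsymm : A j i = A i j := by simpa using congrFun (congrFun hA.1 i) j
  have hform (s : ℝ) : 0 ≤ A i i + 2 * s * A i j + s ^ 2 * A j j := by
    have := hA.dotProduct_mulVec_nonneg (Pi.single i 1 + s • Pi.single j 1)
    simp [add_dotProduct, dotProduct_add, mulVec_add, mulVec_smul, hsymm] at this
    linarith
  rw [abs_le]
  constructor <;> nlinarith [hform 1, hform (-1), hdiag i, hdiag j]

theorem PosSemidef.transpose_mul_mul_same {κ : Type*} [Fintype κ] {A : Matrix ι ι ℝ}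
    (hA : A.PosSemidef) (B : Matrix ι κ ℝ) : (Bᵀ * A * B).PosSemidef := by
  simpa using hA.conjTranspose_mul_mul_same B

end Closed

variable {ι κ : Type*} [Fintype ι] [DecidableEq ι] [Fintype κ] [DecidableEq κ]

theorem mul_inv_one_add_mul_mul_eq {α : Type*} [CommRing α] {S C : Matrix ι ι α}
    (h : IsUnit (1 + S * C * S).det) :
    S * (1 + S * C * S)⁻¹ * S = (1 + S * S * C)⁻¹ * (S * S) := by
  have h' : IsUnit (1 + S * S * C).det := by
    rwa [Matrix.mul_assoc, det_one_add_mul_comm]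
  have hpush : (1 + S * S * C) * S = S * (1 + S * C * S) := by
    simp only [Matrix.add_mul, Matrix.mul_add, Matrix.one_mul, Matrix.mul_one, Matrix.mul_assoc]
  rw [← Matrix.mul_assoc]
  congr 1
  calc S * (1 + S * C * S)⁻¹
      = (1 + S * S * C)⁻¹ * ((1 + S * S * C) * S) * (1 + S * C * S)⁻¹ := by
        rw [← Matrix.mul_assoc, nonsing_inv_mul _ h', Matrix.one_mul]
    _ = (1 + S * S * C)⁻¹ * S := by
        rw [hpush, Matrix.mul_assoc, Matrix.mul_assoc S (1 + S * C * S), mul_nonsing_inv _ h,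
          Matrix.mul_one]

theorem PosSemidef.sub_mul_inv_mul {P : Matrix ι ι ℝ} {R : Matrix κ κ ℝ} (hP : P.PosSemidef)
    (hR : R.PosDef) (B : Matrix ι κ ℝ) :
    (P - P * B * (R + Bᵀ * P * B)⁻¹ * (Bᵀ * P)).PosSemidef := by
  set Y := R + Bᵀ * P * B
  have hY : Y.PosDef := hR.add_posSemidef (hP.transpose_mul_mul_same B)
  have hPt : Pᵀ = P := hP.transpose_eq
  have hGt : Y⁻¹ᵀ = Y⁻¹ := by
    rw [transpose_nonsing_inv, hY.posSemidef.transpose_eq]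
  have hGYG (X : Matrix κ ι ℝ) : Y⁻¹ * (Y * (Y⁻¹ * X)) = Y⁻¹ * X := by
    rw [← Matrix.mul_assoc Y⁻¹, nonsing_inv_mul _ hY.det_pos.ne'.isUnit, Matrix.one_mul]
  -- complete the square around the minimizing gain `K`
  set K := Y⁻¹ * (Bᵀ * P)
  have hsq : P - P * B * Y⁻¹ * (Bᵀ * P) = (1 - B * K)ᵀ * P * (1 - B * K) + Kᵀ * R * K := by
    rw [show R = Y - Bᵀ * P * B by simp [Y]]
    simp only [K, transpose_sub, transpose_one, transpose_mul, hGt, hPt, Matrix.mul_sub,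
      Matrix.sub_mul, Matrix.one_mul, Matrix.mul_one, Matrix.mul_assoc, hGYG]
    abel
  exact hsq ▸ (hP.transpose_mul_mul_same _).add (hR.posSemidef.transpose_mul_mul_same K)

theorem PosSemidef.one_add_trace_le_det_one_add {M : Matrix ι ι ℝ} (hM : M.PosSemidef) :
    1 + M.trace ≤ (1 + M).det := by
  have hsa : IsSelfAdjoint M := hM.1.isSelfAdjoint
  have h : 1 + M = cfc (fun x : ℝ => 1 + x) M := by
    rw [cfc_const_add (1 : ℝ) (fun x => x) M, cfc_id' ℝ M, Algebra.algebraMap_eq_smul_one,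
      one_smul]
  rw [h, hM.1.cfc_eq, hM.1.trace_eq_sum_eigenvalues]
  simpa [IsHermitian.cfc, -Unitary.conjStarAlgAut_apply, det_diagonal] using
    Finset.univ.one_add_sum_le_prod_one_add fun i _ => hM.eigenvalues_nonneg i

open scoped MatrixOrder

theorem PosSemidef.trace_mul_nonneg {A B : Matrix ι ι ℝ} (hA : A.PosSemidef)
    (hB : B.PosSemidef) : 0 ≤ (A * B).trace := by
  have hS := (CFC.sqrt_nonneg A).posSemidef.transpose_eq
  rw [← CFC.sqrt_mul_sqrt_self A hA.nonneg, Matrix.mul_assoc, Matrix.trace_mul_comm]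
  simpa [hS, Matrix.mul_assoc] using (hB.transpose_mul_mul_same (CFC.sqrt A)).trace_nonneg

theorem PosDef.exists_pos_mul_trace_le {A : Matrix ι ι ℝ} (hA : A.PosDef) :
    ∃ c : ℝ, 0 < c ∧ ∀ B : Matrix ι ι ℝ, B.PosSemidef → c * B.trace ≤ (A * B).trace := by
  obtain hι | hι := isEmpty_or_nonempty ι
  · exact ⟨1, one_pos, fun B _ => by simp [Matrix.trace, Finset.univ_eq_empty]⟩
  obtain ⟨c, hc, hle⟩ := (CFC.exists_pos_algebraMap_le_iff hA.isHermitian.isSelfAdjoint).2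
    fun x hx => (isStrictlyPositive_iff_posDef.2 hA).spectrum_pos hx
  refine ⟨c, hc, fun B hB => ?_⟩
  have := (Matrix.le_iff.1 hle).trace_mul_nonneg hB
  rw [Algebra.algebraMap_eq_smul_one, Matrix.sub_mul, trace_sub, Matrix.smul_mul, Matrix.one_mul,
    trace_smul, smul_eq_mul] at this
  linarith

theorem PosSemidef.det_one_add_mul_pos {σ C : Matrix ι ι ℝ} (hσ : σ.PosSemidef)
    (hC : C.PosSemidef) : 0 < (1 + σ * C).det := by
  have hSCS := (CFC.sqrt_nonneg σ).posSemidef.transpose_eq ▸ hC.transpose_mul_mul_same (CFC.sqrt σ)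
  rw [← CFC.sqrt_mul_sqrt_self σ hσ.nonneg, Matrix.mul_assoc, det_one_add_mul_comm]
  exact (PosDef.one.add_posSemidef hSCS).det_pos

theorem PosDef.one_add_trace_mul_le_det_add_inv_div {C σ : Matrix ι ι ℝ} (hC : C.PosDef)
    (hσ : σ.PosSemidef) : 1 + (C * σ).trace ≤ (σ + C⁻¹).det / C⁻¹.det := by
  have hfactor : σ + C⁻¹ = (1 + σ * C) * C⁻¹ := by
    rw [Matrix.add_mul, Matrix.one_mul, Matrix.mul_assoc, mul_nonsing_inv _ hC.det_pos.ne'.isUnit,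
      Matrix.mul_one, add_comm]
  rw [hfactor, det_mul, mul_div_assoc, div_self hC.inv.det_pos.ne', mul_one]
  have hSCS := (CFC.sqrt_nonneg σ).posSemidef.transpose_eq ▸
    hC.posSemidef.transpose_mul_mul_same (CFC.sqrt σ)
  rw [← CFC.sqrt_mul_sqrt_self σ hσ.nonneg, Matrix.mul_assoc, det_one_add_mul_comm,
    ← Matrix.mul_assoc, Matrix.trace_mul_comm, Matrix.mul_assoc]
  simpa [Matrix.mul_assoc] using hSCS.one_add_trace_le_det_one_add

end Matrix

theorem exists_forall_le_of_coercive_trace {ι d : Type*} [Finite ι] [Fintype d]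
    {f : (ι → Matrix d d ℝ) → ℝ} (hf : ContinuousOn f {τ | ∀ k, (τ k).PosSemidef})
    {g : ι → ℝ → ℝ} (hg : ∀ k, Tendsto (g k) atTop atTop)
    (hfg : ∀ τ, (∀ k, (τ k).PosSemidef) → ∀ k, g k (τ k).trace ≤ f τ) :
    ∃ σ, (∀ k, (σ k).PosSemidef) ∧ ∀ τ, (∀ k, (τ k).PosSemidef) → f σ ≤ f τ := by
  have hclosed : IsClosed {τ : ι → Matrix d d ℝ | ∀ k, (τ k).PosSemidef} :=
    Set.ofPred_forall _ ▸ isClosed_iInter fun k =>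
      Matrix.isClosed_setOf_posSemidef.preimage
        (continuous_apply k : Continuous fun τ : ι → Matrix d d ℝ => τ k)
  choose M hM using fun k => eventually_atTop.1 ((hg k).eventually_ge_atTop (f 0))
  set K := Set.univ.pi fun k => {A : Matrix d d ℝ | ∀ i j, A i j ∈ Set.Icc (-M k) (M k)}
  have hK : IsCompact K := isCompact_univ_pi fun k => isCompact_Icc.matrix
  have hcoercive : ∀ᶠ τ in cocompact _ ⊓ 𝓟 {τ | ∀ k, (τ k).PosSemidef}, f 0 ≤ f τ := by
    refine (hasBasis_cocompact.inf_principal _).eventually_iff.2 ⟨K, hK, ?_⟩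
    rintro τ ⟨hτK, hτ⟩
    simp only [K, Set.mem_compl_iff, Set.mem_univ_pi, Set.mem_ofPred_eq, Set.mem_Icc, ← abs_le,
      not_forall, not_le] at hτK
    obtain ⟨k, i, j, hkij⟩ := hτK
    exact (hM k _ (hkij.le.trans ((hτ k).abs_apply_le_trace i j))).trans (hfg τ hτ k)
  obtain ⟨σ, hσ, hmin⟩ := hf.exists_isMinOn' hclosed (fun _ => .zero) hcoercive
  exact ⟨σ, hσ, fun τ hτ => hmin hτ⟩

section Msqrt

open scoped MatrixOrder

variable {d : ℕ} {σ : Matrix (Fin d) (Fin d) ℝ}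

theorem msqrt_eq_sqrt (hσ : σ.PosSemidef) : msqrt σ = CFC.sqrt σ := by
  rw [CFC.sqrt_eq_cfc, cfc_nnreal_eq_real _ σ, hσ.1.cfc_eq, msqrt, dif_pos hσ]
  simp [IsHermitian.cfc, Function.comp_def, max_eq_left (hσ.eigenvalues_nonneg _)]

theorem posSemidef_msqrt (hσ : σ.PosSemidef) : (msqrt σ).PosSemidef :=
  msqrt_eq_sqrt hσ ▸ (CFC.sqrt_nonneg σ).posSemidef

theorem msqrt_mul_self (hσ : σ.PosSemidef) : msqrt σ * msqrt σ = σ :=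
  msqrt_eq_sqrt hσ ▸ CFC.sqrt_mul_sqrt_self σ hσ.nonneg

end Msqrt

section ExtT

variable {m T : ℕ} {τ : Fin T → Matrix (Fin m) (Fin m) ℝ}

@[simp]
theorem extT_val (k : Fin T) : extT T τ k = τ k := by
  simp [extT]

theorem posSemidef_extT (hτ : ∀ k, (τ k).PosSemidef) (k : ℕ) : (extT T τ k).PosSemidef := by
  unfold extT
  split_ifs
  exacts [hτ _, .zero]

theorem continuous_extT (k : ℕ) :
    Continuous fun τ : Fin T → Matrix (Fin m) (Fin m) ℝ => extT T τ k := by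
  unfold extT
  split_ifs <;> fun_prop

end ExtT

namespace LQData

variable {n m : ℕ} (P : LQData n m) {T : ℕ}

section Fixed

variable {σ : ℕ → Matrix (Fin m) (Fin m) ℝ} {k : ℕ}

theorem Ric_of_le (h : T ≤ k) : P.Ric T σ k = P.F := by
  rw [Ric, dif_pos h]

theorem Ric_of_lt (h : k < T) :
    P.Ric T σ k = (P.A k)ᵀ * P.Ric T σ (k + 1) * P.A k - (1 / P.ε) •
      ((P.A k)ᵀ * P.Ric T σ (k + 1) * P.B k * P.SigPi T σ k * (P.B k)ᵀ * P.Ric T σ (k + 1) *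
        P.A k) := by
  rw [Ric, dif_neg h.not_ge]
  simp only [SigPi, Ck, Matrix.mul_assoc]

theorem posSemidef_Ck (hε : 0 < P.ε) (hR : (P.R k).PosSemidef)
    (hRic : (P.Ric T σ (k + 1)).PosSemidef) : (P.Ck T σ k).PosSemidef :=
  (hR.add (hRic.transpose_mul_mul_same (P.B k))).smul (by positivity)

theorem posDef_R_add (hR : (P.R k).PosDef) (hRic : (P.Ric T σ (k + 1)).PosSemidef) :
    (P.R k + (P.B k)ᵀ * P.Ric T σ (k + 1) * P.B k).PosDef :=
  hR.add_posSemidef (hRic.transpose_mul_mul_same (P.B k))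

theorem Ric_eq_lqr_step (hε : 0 < P.ε) (h : k < T) (hσ : (σ k).PosSemidef)
    (hC : (P.Ck T σ k).PosSemidef) :
    P.Ric T σ k = (P.A k)ᵀ * (P.Ric T σ (k + 1) - P.Ric T σ (k + 1) * (P.B k * msqrt (σ k)) *
      (P.ε • 1 + msqrt (σ k) * P.R k * msqrt (σ k) +
        (P.B k * msqrt (σ k))ᵀ * P.Ric T σ (k + 1) * (P.B k * msqrt (σ k)))⁻¹ *
      ((P.B k * msqrt (σ k))ᵀ * P.Ric T σ (k + 1))) * P.A k := by
  set S := msqrt (σ k)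
  have hS : Sᵀ = S := (posSemidef_msqrt hσ).transpose_eq
  have hM : (1 + S * P.Ck T σ k * S).PosDef :=
    PosDef.one.add_posSemidef (by simpa only [hS] using hC.transpose_mul_mul_same S)
  have hN : P.ε • 1 + S * P.R k * S + (P.B k * S)ᵀ * P.Ric T σ (k + 1) * (P.B k * S) =
      P.ε • (1 + S * P.Ck T σ k * S) := by
    simp only [Ck, transpose_mul, hS, smul_add, Matrix.mul_add, Matrix.add_mul, Matrix.mul_smul,
      Matrix.smul_mul, smul_smul, mul_one_div_cancel hε.ne', one_smul, Matrix.mul_assoc]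
    abel
  have := invertibleOfNonzero hε.ne'
  rw [hN, Matrix.inv_smul _ _ hM.det_pos.ne'.isUnit, invOf_eq_inv, P.Ric_of_lt h]
  simp only [SigPi, transpose_mul, hS, Matrix.mul_sub, Matrix.sub_mul, Matrix.mul_smul,
    Matrix.smul_mul, Matrix.mul_assoc, one_div, S]

theorem posSemidef_Ric (hε : 0 < P.ε) (hR : ∀ k < T, (P.R k).PosSemidef) (hF : P.F.PosSemidef)
    (hσ : ∀ k < T, (σ k).PosSemidef) (k : ℕ) : (P.Ric T σ k).PosSemidef := by
  rcases le_or_gt T k with h | h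
  · rwa [P.Ric_of_le h]
  have ih := posSemidef_Ric hε hR hF hσ (k + 1)
  have hS := (posSemidef_msqrt (hσ k h)).transpose_eq
  have hR' : (P.ε • 1 + msqrt (σ k) * P.R k * msqrt (σ k)).PosDef :=
    (PosDef.one.smul hε).add_posSemidef
      (by simpa only [hS] using (hR k h).transpose_mul_mul_same (msqrt (σ k)))
  rw [P.Ric_eq_lqr_step hε h (hσ k h) (P.posSemidef_Ck hε (hR k h) ih)]
  exact (ih.sub_mul_inv_mul hR' _).transpose_mul_mul_same _
termination_by T - k

theorem SigQ_eq_inv_Ck (hε : 0 < P.ε) (hR : (P.R k).PosDef)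
    (hRic : (P.Ric T σ (k + 1)).PosSemidef) : P.SigQ T σ k = (P.Ck T σ k)⁻¹ := by
  have := invertibleOfNonzero (one_div_ne_zero hε.ne')
  rw [SigQ, Ck, Matrix.inv_smul _ _ (P.posDef_R_add hR hRic).det_pos.ne'.isUnit, invOf_eq_inv,
    one_div, inv_inv]

theorem SigPi_eq (hσ : (σ k).PosSemidef) (hC : (P.Ck T σ k).PosSemidef) :
    P.SigPi T σ k = (1 + σ k * P.Ck T σ k)⁻¹ * σ k := by
  have hS := (posSemidef_msqrt hσ).transpose_eq
  have hSCS : (1 + msqrt (σ k) * P.Ck T σ k * msqrt (σ k)).PosDef :=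
    PosDef.one.add_posSemidef (by simpa only [hS] using hC.transpose_mul_mul_same (msqrt (σ k)))
  rw [SigPi, mul_inv_one_add_mul_mul_eq hSCS.det_pos.ne'.isUnit, msqrt_mul_self hσ]

theorem trace_R_mul_div_le_trace_Ck_mul (hε : 0 < P.ε) (hRic : (P.Ric T σ (k + 1)).PosSemidef)
    (hσ : (σ k).PosSemidef) : (P.R k * σ k).trace / P.ε ≤ (P.Ck T σ k * σ k).trace := by
  have hBRB := (hRic.transpose_mul_mul_same (P.B k)).trace_mul_nonneg hσ
  rw [Ck, Matrix.smul_mul, trace_smul, Matrix.add_mul, trace_add, smul_eq_mul, one_div_mul_eq_div,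
    add_div]
  exact le_add_of_nonneg_right (div_nonneg hBRB hε.le)

theorem one_add_trace_R_mul_div_le_det_ratio (hε : 0 < P.ε) (hR : (P.R k).PosDef)
    (hRic : (P.Ric T σ (k + 1)).PosSemidef) (hσ : (σ k).PosSemidef) :
    1 + (P.R k * σ k).trace / P.ε ≤ (σ k + P.SigQ T σ k).det / (P.SigQ T σ k).det := by
  have hC : (P.Ck T σ k).PosDef := (P.posDef_R_add hR hRic).smul (by positivity)
  rw [P.SigQ_eq_inv_Ck hε hR hRic]
  exact (add_le_add_right (P.trace_R_mul_div_le_trace_Ck_mul hε hRic hσ) 1).trans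
    (hC.one_add_trace_mul_le_det_add_inv_div hσ)

theorem posDef_SigQ (hε : 0 < P.ε) (hR : (P.R k).PosDef)
    (hRic : (P.Ric T σ (k + 1)).PosSemidef) : (P.SigQ T σ k).PosDef :=
  (P.posDef_R_add hR hRic).inv.smul hε

theorem one_le_det_ratio (hε : 0 < P.ε) (hR : (P.R k).PosDef)
    (hRic : (P.Ric T σ (k + 1)).PosSemidef) (hσ : (σ k).PosSemidef) :
    1 ≤ (σ k + P.SigQ T σ k).det / (P.SigQ T σ k).det :=
  (le_add_of_nonneg_right (div_nonneg (hR.posSemidef.trace_mul_nonneg hσ) hε.le)).trans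
    (P.one_add_trace_R_mul_div_le_det_ratio hε hR hRic hσ)

end Fixed

section Continuity

variable {X : Type*} [TopologicalSpace X] {τ : X → ℕ → Matrix (Fin m) (Fin m) ℝ}

theorem continuous_Ric (hε : 0 < P.ε) (hR : ∀ k < T, (P.R k).PosSemidef) (hF : P.F.PosSemidef)
    (hτ : ∀ x, ∀ k < T, (τ x k).PosSemidef) (hτc : ∀ k, Continuous fun x => τ x k) (k : ℕ) :
    Continuous fun x => P.Ric T (τ x) k := by
  rcases le_or_gt T k with h | h
  · simp only [P.Ric_of_le h]
    exact continuous_const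
  have ih := continuous_Ric hε hR hF hτ hτc (k + 1)
  have hC (x : X) : (P.Ck T (τ x) k).PosSemidef :=
    P.posSemidef_Ck hε (hR k h) (P.posSemidef_Ric hε hR hF (hτ x) (k + 1))
  have hinv : Continuous fun x => (1 + τ x k * P.Ck T (τ x) k)⁻¹ :=
    Continuous.matrix_nonsing_inv (by unfold Ck; fun_prop) fun x =>
      ((hτ x k h).det_one_add_mul_pos (hC x)).ne'
  have hSigPi (x : X) := P.SigPi_eq (hτ x k h) (hC x)
  simp only [P.Ric_of_lt h, hSigPi]
  fun_prop
termination_by T - k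

end Continuity

theorem continuousOn_Jcheck (hε : 0 < P.ε) (hR : ∀ k < T, (P.R k).PosDef) (hF : P.F.PosSemidef) :
    ContinuousOn (P.Jcheck T) {τ | ∀ k, (τ k).PosSemidef} := by
  rw [continuousOn_iff_continuous_domRestrict]
  set s := {τ : Fin T → Matrix (Fin m) (Fin m) ℝ | ∀ k, (τ k).PosSemidef}
  have hτ (x : s) (k : ℕ) : (extT T x.1 k).PosSemidef := posSemidef_extT x.2 k
  have hτc (k : ℕ) : Continuous fun x : s => extT T x.1 k :=
    (continuous_extT k).comp continuous_subtype_val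
  have hR' : ∀ k < T, (P.R k).PosSemidef := fun k hk => (hR k hk).posSemidef
  have hRic := P.continuous_Ric hε hR' hF (fun x k _ => hτ x k) hτc
  have hRicPSD (x : s) (k : ℕ) := P.posSemidef_Ric hε hR' hF (fun k _ => hτ x k) k
  have hQ (k : Fin T) : Continuous fun x : s => P.SigQ T (extT T x.1) k := by
    unfold SigQ
    exact (continuous_const (y := P.ε)).smul (Continuous.matrix_nonsing_inv (by fun_prop) fun x =>
      (P.posDef_R_add (hR k k.2) (hRicPSD x _)).det_pos.ne')
  refine continuous_const.mul ((((hRic 0).matrix_mul continuous_const).matrix_trace).add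
    (continuous_finsetSum _ fun k _ => .add (continuous_const.mul (.log ?_ fun x => ?_))
      ((hRic _).matrix_mul continuous_const).matrix_trace))
  · exact ((hτc k).add (hQ k)).matrix_det.div (hQ k).matrix_det fun x =>
      (P.posDef_SigQ hε (hR k k.2) (hRicPSD x _)).det_pos.ne'
  · exact (zero_lt_one.trans_le (P.one_le_det_ratio hε (hR k k.2) (hRicPSD x _) (hτ x k))).ne'

theorem mul_log_one_add_trace_le_Jcheck (hε : 0 < P.ε) (hR : ∀ k < T, (P.R k).PosDef)
    (hSw : ∀ k < T, (P.Sw k).PosSemidef) (hF : P.F.PosSemidef) (hSini : P.Sini.PosSemidef)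
    {τ : Fin T → Matrix (Fin m) (Fin m) ℝ} (hτ : ∀ k, (τ k).PosSemidef) (k : Fin T) :
    P.ε / 2 * Real.log (1 + (P.R k * τ k).trace / P.ε) ≤ P.Jcheck T τ := by
  set σ := extT T τ
  have hσ (j : ℕ) : (σ j).PosSemidef := posSemidef_extT hτ j
  have hRic (j : ℕ) : (P.Ric T σ j).PosSemidef :=
    P.posSemidef_Ric hε (fun j hj => (hR j hj).posSemidef) hF (fun j _ => hσ j) j
  set r : Fin T → ℝ := fun j => (σ j + P.SigQ T σ j).det / (P.SigQ T σ j).det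
  set w : Fin T → ℝ := fun j => (P.Ric T σ (j + 1) * P.Sw j).trace
  have hterm (j : Fin T) : 0 ≤ P.ε * Real.log (r j) + w j :=
    add_nonneg (mul_nonneg hε.le (Real.log_nonneg (P.one_le_det_ratio hε (hR j j.2) (hRic _)
      (hσ j)))) ((hRic _).trace_mul_nonneg (hSw j j.2))
  have hrk : 1 + (P.R k * τ k).trace / P.ε ≤ r k := by
    simpa [r, σ] using P.one_add_trace_R_mul_div_le_det_ratio hε (hR k k.2) (hRic _) (hσ k)
  have hpos : 0 < 1 + (P.R k * τ k).trace / P.ε := add_pos_of_pos_of_nonneg one_pos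
    (div_nonneg ((hR k k.2).posSemidef.trace_mul_nonneg (hτ k)) hε.le)
  calc P.ε / 2 * Real.log (1 + (P.R k * τ k).trace / P.ε)
      ≤ 1 / 2 * (P.ε * Real.log (r k) + w k) := by
        have := mul_le_mul_of_nonneg_left (Real.log_le_log hpos hrk) hε.le
        linarith [(hRic (k + 1)).trace_mul_nonneg (hSw k k.2)]
    _ ≤ 1 / 2 * ∑ j, (P.ε * Real.log (r j) + w j) := by
        gcongr
        exact Finset.single_le_sum (fun j _ => hterm j) (Finset.mem_univ k)
    _ ≤ P.Jcheck T τ :=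
        mul_le_mul_of_nonneg_left (le_add_of_nonneg_left
          ((hRic 0).trace_mul_nonneg hSini)) (by norm_num)

end LQData

theorem jcheck_exists_min_general {n m : ℕ} (T : ℕ)
    (P : LQData n m) (hε : 0 < P.ε)
    (hR : ∀ k < T, (P.R k).PosDef) (hSw : ∀ k < T, (P.Sw k).PosDef)
    (hF : P.F.PosDef) (hSini : P.Sini.PosDef) :
    ∃ σ : Fin T → Matrix (Fin m) (Fin m) ℝ, (∀ k, (σ k).PosSemidef) ∧
      ∀ τ : Fin T → Matrix (Fin m) (Fin m) ℝ, (∀ k, (τ k).PosSemidef) →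
        P.Jcheck T σ ≤ P.Jcheck T τ := by
  choose c hc hcR using fun k : Fin T => (hR k k.2).exists_pos_mul_trace_le
  refine exists_forall_le_of_coercive_trace (P.continuousOn_Jcheck hε hR hF.posSemidef)
    (g := fun k t => P.ε / 2 * Real.log (1 + c k * t / P.ε)) (fun k => ?_) fun τ hτ k => ?_
  · exact Tendsto.const_mul_atTop (half_pos hε) (Real.tendsto_log_atTop.comp
      (tendsto_atTop_add_const_left _ 1 ((tendsto_id.const_mul_atTop (hc k)).atTop_div_const hε)))
  have htr := (hτ k).trace_nonneg
  refine le_trans ?_ (P.mul_log_one_add_trace_le_Jcheck hε hR (fun k hk => (hSw k hk).posSemidef)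
    hF.posSemidef hSini.posSemidef hτ k)
  gcongr
  · exact add_pos_of_pos_of_nonneg one_pos (div_nonneg (mul_nonneg (hc k).le htr) hε.le)
  · exact hcR k _ (hτ k)

theorem jcheck_exists_min {n m : ℕ} (hn : 1 ≤ n) (hm : 1 ≤ m) (T : ℕ) (hT : 1 ≤ T)
    (P : LQData n m) (hε : 0 < P.ε)
    (hR : ∀ k < T, (P.R k).PosDef) (hSw : ∀ k < T, (P.Sw k).PosDef)
    (hF : P.F.PosDef) (hSini : P.Sini.PosDef) :
    ∃ σ : Fin T → Matrix (Fin m) (Fin m) ℝ, (∀ k, (σ k).PosSemidef) ∧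
      ∀ τ : Fin T → Matrix (Fin m) (Fin m) ℝ, (∀ k, (τ k).PosSemidef) →
        P.Jcheck T σ ≤ P.Jcheck T τ :=
  jcheck_exists_min_general T P hε hR hSw hF hSini
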